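/- It is not the case that q_z = ∫_h^∞ q_t^{−1}·exp(−((d−1)/(2d))·((z − t/(d−1))² + (t − z/(d−1))²)) dt holds for every z ≥ h. (This functional equation is the consistency condition that an invariant measure of Gaussian-free-field type for the environment seen from the random walker would have to satisfy; its failure shows that no such invariant measure exists.) -/

import Mathlib

open MeasureTheory ProbabilityTheory

noncomputable section
namespace GFFStmt

/-- `q_t := √(2π·d/(d−1)) · ℙ(W_t ≥ h)`, where `W_t` is Gaussian with mean `t/(d−1)` and
variance `d/(d−1)`. -/
noncomputable def qfun (d : ℕ) (h t : ℝ) : ℝ :=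
  Real.sqrt (2 * Real.pi * (d : ℝ) / ((d : ℝ) - 1)) *
    ((gaussianReal (t / ((d : ℝ) - 1)) (Real.toNNReal ((d : ℝ) / ((d : ℝ) - 1))))
      (Set.Ici h)).toReal

/-!
Since `q` is positive and nondecreasing, `q_t ≥ q_h > 0` for `t ≥ h`, so the right-hand side is
at most `q_h⁻¹` times a Gaussian integral over all of `ℝ`. Completing the square in `t`
(with `e = d - 1` and `a = e / (2d)`) shows that this integral is a constant times
`exp (-a c z²)`, where `c = (e² - 1)² / (e² (e² + 1)) > 0` because `e ≥ 2`. Hence the right-hand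
side tends to `0` as `z → ∞`, while the left-hand side stays above `q_h`.
-/

open Real Set Filter Topology

lemma gaussianReal_Ici_pos (m : ℝ) {v : NNReal} (hv : v ≠ 0) (x : ℝ) :
    0 < gaussianReal m v (Ici x) :=
  pos_iff_ne_zero.2 fun h0 => by simpa using gaussianReal_absolutelyContinuous' m hv h0

lemma monotone_gaussianReal_Ici (v : NNReal) (x : ℝ) :
    Monotone fun m => gaussianReal m v (Ici x) := by
  intro m₁ m₂ hm
  have hmap : gaussianReal m₂ v = (gaussianReal m₁ v).map (· + (m₂ - m₁)) := by
    rw [gaussianReal_map_add_const, add_sub_cancel]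
  simp only [hmap, Measure.map_apply (measurable_add_const _) measurableSet_Ici]
  exact measure_mono fun t (ht : x ≤ t) => show x ≤ t + (m₂ - m₁) by linarith

lemma qfun_pos {d : ℕ} (hd : 1 < d) (h t : ℝ) : 0 < qfun d h t := by
  have he : (0 : ℝ) < d - 1 := by
    have : (1 : ℝ) < d := by exact_mod_cast hd
    linarith
  have hv : (d / (d - 1) : ℝ).toNNReal ≠ 0 := (toNNReal_pos.2 (by positivity)).ne'
  exact mul_pos (sqrt_pos.2 (by positivity))
    (ENNReal.toReal_pos (gaussianReal_Ici_pos _ hv h).ne' (measure_ne_top _ _))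

lemma monotone_qfun {d : ℕ} (hd : 1 ≤ d) (h : ℝ) : Monotone (qfun d h) := by
  have he : (0 : ℝ) ≤ d - 1 := by
    have : (1 : ℝ) ≤ d := by exact_mod_cast hd
    linarith
  intro s t hst
  exact mul_le_mul_of_nonneg_left (ENNReal.toReal_mono (measure_ne_top _ _)
    (monotone_gaussianReal_Ici _ h (div_le_div_of_nonneg_right hst he))) (sqrt_nonneg _)

lemma sq_sub_div_add_sq_sub_div {e : ℝ} (he : e ≠ 0) (z t : ℝ) :
    (z - t / e) ^ 2 + (t - z / e) ^ 2 =
      (e ^ 2 - 1) ^ 2 / (e ^ 2 * (e ^ 2 + 1)) * z ^ 2 +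
        (e ^ 2 + 1) / e ^ 2 * (t - 2 * e / (e ^ 2 + 1) * z) ^ 2 := by
  field_simp
  ring

lemma exp_neg_mul_sq_sub_div_add_sq_sub_div {e : ℝ} (he : e ≠ 0) (a z t : ℝ) :
    exp (-a * ((z - t / e) ^ 2 + (t - z / e) ^ 2)) =
      exp (-(a * ((e ^ 2 - 1) ^ 2 / (e ^ 2 * (e ^ 2 + 1)))) * z ^ 2) *
        exp (-(a * ((e ^ 2 + 1) / e ^ 2)) * (t - 2 * e / (e ^ 2 + 1) * z) ^ 2) := by
  rw [sq_sub_div_add_sq_sub_div he, ← exp_add]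
  ring_nf

lemma integrable_exp_neg_mul_sq_sub_div_add_sq_sub_div {e a : ℝ} (he : e ≠ 0) (ha : 0 < a)
    (z : ℝ) : Integrable fun t => exp (-a * ((z - t / e) ^ 2 + (t - z / e) ^ 2)) := by
  simp_rw [exp_neg_mul_sq_sub_div_add_sq_sub_div he]
  exact ((integrable_exp_neg_mul_sq (by positivity)).comp_sub_right _).const_mul _

lemma integral_exp_neg_mul_sq_sub_div_add_sq_sub_div {e a : ℝ} (he : e ≠ 0) (z : ℝ) :
    ∫ t, exp (-a * ((z - t / e) ^ 2 + (t - z / e) ^ 2)) =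
      exp (-(a * ((e ^ 2 - 1) ^ 2 / (e ^ 2 * (e ^ 2 + 1)))) * z ^ 2) *
        sqrt (π / (a * ((e ^ 2 + 1) / e ^ 2))) := by
  simp_rw [exp_neg_mul_sq_sub_div_add_sq_sub_div he]
  rw [integral_const_mul,
    integral_sub_right_eq_self (fun t => exp (-(a * ((e ^ 2 + 1) / e ^ 2)) * t ^ 2)),
    integral_gaussian]

lemma setIntegral_Ioi_inv_mul_le_of_monotone {q f : ℝ → ℝ} {x : ℝ} (hq : Monotone q)
    (hqx : 0 < q x) (hf : Integrable f) (hf0 : 0 ≤ f) :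
    ∫ t in Ioi x, (q t)⁻¹ * f t ≤ (q x)⁻¹ * ∫ t, f t := by
  calc ∫ t in Ioi x, (q t)⁻¹ * f t
      ≤ ∫ t in Ioi x, (q x)⁻¹ * f t := by
        refine integral_mono_of_nonneg ?_ (hf.const_mul _).restrict ?_
        · filter_upwards [ae_restrict_mem measurableSet_Ioi] with t ht
          exact mul_nonneg (inv_nonneg.2 (hqx.trans_le (hq ht.le)).le) (hf0 t)
        · filter_upwards [ae_restrict_mem measurableSet_Ioi] with t ht
          exact mul_le_mul_of_nonneg_right (inv_anti₀ hqx (hq ht.le)) (hf0 t)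
    _ ≤ ∫ t, (q x)⁻¹ * f t :=
        setIntegral_le_integral (hf.const_mul _)
          (ae_of_all _ fun t => mul_nonneg (inv_nonneg.2 hqx.le) (hf0 t))
    _ = (q x)⁻¹ * ∫ t, f t := integral_const_mul _ _

lemma tendsto_exp_neg_mul_sq_atTop {b : ℝ} (hb : 0 < b) :
    Tendsto (fun z => exp (-b * z ^ 2)) atTop (𝓝 0) := by
  refine tendsto_exp_atBot.comp ?_
  simp_rw [neg_mul]
  exact tendsto_neg_atTop_atBot.comp ((tendsto_pow_atTop two_ne_zero).const_mul_atTop hb)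

/-- the functional equation
`q_z = ∫_h^∞ q_t⁻¹·exp(−((d−1)/(2d))·((z − t/(d−1))² + (t − z/(d−1))²)) dt` cannot hold for
every `z ≥ h`; hence no invariant measure of Gaussian-free-field type for the environment
seen from the walker exists. -/
theorem stmt_19 (d : ℕ) (hd : 3 ≤ d) (h : ℝ) :
    ¬ (∀ z : ℝ, h ≤ z →
      qfun d h z =
        ∫ t in Set.Ioi h,
          (qfun d h t)⁻¹ *
            Real.exp (-(((d : ℝ) - 1) / (2 * (d : ℝ))) *
              ((z - t / ((d : ℝ) - 1)) ^ 2 + (t - z / ((d : ℝ) - 1)) ^ 2))) := by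
  intro H
  have hd' : (3 : ℝ) ≤ d := by exact_mod_cast hd
  set e : ℝ := (d : ℝ) - 1
  set a : ℝ := e / (2 * d)
  have he2 : 2 ≤ e := by linarith
  have he0 : e ≠ 0 := by positivity
  have ha0 : 0 < a := by positivity
  have hq_mono := monotone_qfun (by omega : 1 ≤ d) h
  have hq_pos := qfun_pos (by omega : 1 < d) h h
  set b := a * ((e ^ 2 - 1) ^ 2 / (e ^ 2 * (e ^ 2 + 1)))
  set C := (qfun d h h)⁻¹ * sqrt (π / (a * ((e ^ 2 + 1) / e ^ 2)))
  have hbound : ∀ z, h ≤ z → qfun d h h ≤ C * exp (-b * z ^ 2) := fun z hz =>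
    calc qfun d h h ≤ qfun d h z := hq_mono hz
      _ = ∫ t in Ioi h, (qfun d h t)⁻¹ * exp (-a * ((z - t / e) ^ 2 + (t - z / e) ^ 2)) :=
        H z hz
      _ ≤ (qfun d h h)⁻¹ * ∫ t, exp (-a * ((z - t / e) ^ 2 + (t - z / e) ^ 2)) :=
        setIntegral_Ioi_inv_mul_le_of_monotone hq_mono hq_pos
          (integrable_exp_neg_mul_sq_sub_div_add_sq_sub_div he0 ha0 z) fun _ => (exp_pos _).le
      _ = C * exp (-b * z ^ 2) := by
        rw [integral_exp_neg_mul_sq_sub_div_add_sq_sub_div he0]; ring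
  have hb : 0 < b := by
    have : e ^ 2 - 1 ≠ 0 := by nlinarith
    positivity
  obtain ⟨z, hlt, hz⟩ := (((tendsto_exp_neg_mul_sq_atTop hb).const_mul C).eventually
    (gt_mem_nhds (by simpa using hq_pos)) |>.and (eventually_ge_atTop h)).exists
  exact hlt.not_ge (hbound z hz)

end GFFStmt
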